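/- Let t ≥ 1 and let n be a multiple of 2t with n ≥ 4t. Then the number of binary words w of length n whose prefix normal form equals 1^{2t} (01)^{(n−2t)/2} is at least C_t^{(n−4t)/(2t)}, where C_t = (1/(t+1))·C(2t,t) is the t-th Catalan number. -/

import Mathlib

/-- Number of ones of the infinite binary word `w` in the 0-indexed
half-open interval of positions `[a, b)`. Thus `cnt w j (j+k)` is the number
of 1s in the subword `w[j+1, j+k]` (1-indexed), and `cnt w 0 k` is the number
of 1s in the prefix of length `k`. -/
def cnt (w : ℕ → Bool) (a b : ℕ) : ℕ :=
  ((Finset.Ico a b).filter (fun i => w i = true)).card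

/-- Extend a binary word of length `n` to an infinite word by `false`s. -/
def ext {n : ℕ} (w : Fin n → Bool) : ℕ → Bool :=
  fun i => if h : i < n then w ⟨i, h⟩ else false

/-- Extend a finite binary word (a list, `true = 1`, `false = 0`) to an
infinite word by `false`s. -/
def extL (l : List Bool) : ℕ → Bool :=
  fun i => l.getD i false

/-- The profile `f_w(k)` of a word of length `n`: the maximum number of 1s in
any subword of length `k`, i.e. `max_{0 ≤ j ≤ n-k} |w[j+1, j+k]|₁`. -/
def profile (n : ℕ) (w : ℕ → Bool) (k : ℕ) : ℕ :=
  (Finset.range (n - k + 1)).sup (fun j => cnt w j (j + k))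

/-!
In `w = (10)^t 1^{2t} c₁ ⋯ cₘ` the excess `2 |w[1,p]|₁ - p` of a prefix always lies in
`[0, 2t]`: it is `0` or `1` along `(10)^t`, climbs to `2t` along `1^{2t}`, and afterwards equals `2t` minus
the height of a Dyck path that returns to the ground after each block, so it is `2t` again at
every block boundary. Hence a window of length `k` holds at most `min k ⌊(k + 2t)/2⌋` ones, and
this is attained by a window inside `1^{2t}` (for `k ≤ 2t`) or by a window from inside `(10)^t`
to a block boundary (for `k > 2t`). These numbers are the prefix counts of `1^{2t} (01)^*`.
Different blocks give different words, and there are `catalan t` Dyck words of semilength `t`.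
-/

section Profile

variable {w : ℕ → Bool}

theorem cnt_add_cnt {a b c : ℕ} (hab : a ≤ b) (hbc : b ≤ c) :
    cnt w a b + cnt w b c = cnt w a c := by
  unfold cnt
  rw [← Finset.card_union_of_disjoint
      (Finset.disjoint_filter_filter (Finset.Ico_disjoint_Ico_consecutive a b c)),
    ← Finset.filter_union, Finset.Ico_union_Ico_eq_Ico hab hbc]

theorem cnt_le_sub (a b : ℕ) : cnt w a b ≤ b - a :=
  (Finset.card_filter_le _ _).trans (Nat.card_Ico a b).le

theorem cnt_extL (l : List Bool) (p : ℕ) : cnt (extL l) 0 p = (l.take p).count true := by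
  induction p with
  | zero => simp [cnt]
  | succ p ih =>
    rw [← cnt_add_cnt (Nat.zero_le p) p.le_succ, ih, List.take_add_one, List.count_append]
    congr 1
    rcases lt_or_ge p l.length with hp | hp
    · cases h : l[p] <;>
        simp [cnt, extL, List.getElem?_eq_getElem hp, Finset.filter_singleton, h]
    · simp [cnt, extL, List.getElem?_eq_none hp]

theorem ext_getD_eq_extL {n : ℕ} {l : List Bool} (hl : l.length = n) :
    ext (fun i : Fin n => l.getD i false) = extL l := by
  funext i
  by_cases hi : i < n
  · simp [ext, extL, hi]
  · simp [ext, extL, hi, List.getElem?_eq_none (by omega : l.length ≤ i)]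

theorem eq_of_extL_eq {l l' : List Bool} (hlen : l.length = l'.length)
    (h : extL l = extL l') : l = l' :=
  List.ext_getElem hlen fun i h₁ h₂ => by
    simpa [extL, List.getD_eq_getElem, h₁, h₂] using congrFun h i

variable {n k : ℕ}

theorem cnt_le_profile {j : ℕ} (h : j + k ≤ n) : cnt w j (j + k) ≤ profile n w k :=
  Finset.le_sup (f := fun j => cnt w j (j + k)) (by simp; omega)

theorem profile_le_min {c : ℕ} (hk : k ≤ n)
    (hbal : ∀ p ≤ n, p ≤ 2 * cnt w 0 p ∧ 2 * cnt w 0 p ≤ p + c) :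
    profile n w k ≤ min k ((k + c) / 2) := by
  refine Finset.sup_le fun j hj => ?_
  have hjk : j + k ≤ n := by simp at hj; omega
  have hsplit := cnt_add_cnt (w := w) (Nat.zero_le j) (Nat.le_add_right j k)
  have := cnt_le_sub (w := w) j (j + k)
  have := hbal j (by omega)
  have := hbal (j + k) hjk
  omega

theorem min_add_half_le_profile {t : ℕ} (hdvd : 2 * t ∣ n) (hn : 4 * t ≤ n) (hk : k ≤ n)
    (hhead : ∀ p ≤ 2 * t, 2 * cnt w 0 p ≤ p + 1)
    (hones : ∀ p, 2 * t ≤ p → p ≤ 4 * t → cnt w 0 p + t = p)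
    (hblock : ∀ e ≤ n, 2 * t < e → 2 * t ∣ e → 2 * cnt w 0 e = e + 2 * t) :
    min k (2 * t) + (k - 2 * t) / 2 ≤ profile n w k := by
  rcases le_or_gt k (2 * t) with hk2 | hk2
  · -- the window `[2t, 2t + k)` consists of ones
    have hwin := cnt_add_cnt (w := w) (Nat.zero_le (2 * t)) (Nat.le_add_right (2 * t) k)
    have := hones (2 * t) le_rfl (by omega)
    have := hones (2 * t + k) (by omega) (by omega)
    have := cnt_le_profile (w := w) (n := n) (k := k) (j := 2 * t) (by omega)
    omega
  · -- `s < 2t` is chosen so that the window `[s, s + k)` ends at a multiple of `2t`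
    have ht : 0 < t := Nat.pos_of_ne_zero fun ht => by simp [ht] at hdvd; omega
    set s := (n - k) % (2 * t)
    have hs : s < 2 * t := Nat.mod_lt _ (by omega)
    have hend : s + k = n - 2 * t * ((n - k) / (2 * t)) := by
      have := Nat.mod_add_div (n - k) (2 * t); omega
    have hend_dvd : 2 * t ∣ s + k := hend ▸ Nat.dvd_sub hdvd (dvd_mul_right _ _)
    have hwin := cnt_add_cnt (w := w) (Nat.zero_le s) (Nat.le_add_right s k)
    have := hhead s hs.le
    have := hblock (s + k) (by omega) (by omega) hend_dvd
    have := cnt_le_profile (w := w) (n := n) (k := k) (j := s) (by omega)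
    omega

end Profile

theorem List.count_true_take_flatten_replicate_true_false (t p : ℕ) :
    (((List.replicate t [true, false]).flatten).take p).count true = (min p (2 * t) + 1) / 2 := by
  induction t generalizing p with
  | zero => simp
  | succ t ih =>
    rcases p with _ | _ | p <;> simp [List.replicate_succ, ih] <;> omega

theorem List.count_true_take_flatten_replicate_false_true (s q : ℕ) :
    (((List.replicate s [false, true]).flatten).take q).count true = min q (2 * s) / 2 := by
  induction s generalizing q with
  | zero => simp
  | succ s ih =>
    rcases q with _ | _ | q <;> simp [List.replicate_succ, ih] <;> omega

theorem List.count_true_take_replicate_append_flatten_replicate (t s k : ℕ) :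
    ((List.replicate (2 * t) true ++ (List.replicate s [false, true]).flatten).take k).count true =
      min k (2 * t) + min (k - 2 * t) (2 * s) / 2 := by
  rw [List.take_append, List.count_append, List.length_replicate, List.take_replicate,
    List.count_replicate_self, List.count_true_take_flatten_replicate_false_true]

theorem List.le_two_mul_count_true_take_add {l : List Bool} {c : ℕ} (hc : c ∣ l.length)
    (hbal : ∀ q ≤ l.length, c ∣ q → 2 * (l.take q).count true = q) {q : ℕ}
    (hq : q ≤ l.length) :
    q ≤ 2 * (l.take q).count true + c := by
  rcases Nat.eq_zero_or_pos c with rfl | hc0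
  · rw [zero_dvd_iff] at hc; omega
  have hdiv := Nat.div_add_mod q c
  have hmod := Nat.mod_lt q hc0
  have hbelow := hbal (c * (q / c)) (by omega) (dvd_mul_right _ _)
  have hmono := (List.take_sublist_take_left (l := l) (by omega : c * (q / c) ≤ q)).count_le true
  omega

theorem DyckStep.beq_D_injective : Function.Injective (· == DyckStep.D) := by
  intro a b; cases a <;> cases b <;> simp

namespace DyckWord

open DyckStep

/-- With `U = 0` and `D = 1`, the Dyck words of semilength `t` are exactly the Catalan sequences
of length `2t`. -/
def toBits (p : DyckWord) : List Bool := p.toList.map (· == D)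

theorem toBits_add (p q : DyckWord) : (p + q).toBits = p.toBits ++ q.toBits :=
  List.map_append ..

theorem toBits_sum (ps : List DyckWord) : ps.sum.toBits = (ps.map toBits).flatten := by
  induction ps with
  | nil => rfl
  | cons p ps ih => rw [List.sum_cons, toBits_add, ih, List.map_cons, List.flatten_cons]

theorem length_toBits (p : DyckWord) : p.toBits.length = 2 * p.semilength := by
  rw [toBits, List.length_map, two_mul_semilength_eq_length]

theorem toBits_injective : Function.Injective toBits := fun _ _ h =>
  DyckWord.ext (List.map_injective_iff.2 beq_D_injective h)

theorem count_true_toBits (p : DyckWord) : p.toBits.count true = p.semilength := by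
  rw [toBits, show true = (D == D) from rfl, List.count_map_of_injective _ _ beq_D_injective,
    semilength_eq_count_D]

theorem count_take_toBits (p : DyckWord) (s : DyckStep) (i : ℕ) :
    (p.toBits.take i).count (s == D) = (p.toList.take i).count s := by
  rw [toBits, ← List.map_take, List.count_map_of_injective _ _ beq_D_injective]

theorem two_mul_count_true_take_toBits_le (p : DyckWord) (i : ℕ) :
    2 * (p.toBits.take i).count true ≤ i := by
  have hD : (p.toBits.take i).count true = _ := p.count_take_toBits D i
  have hU : (p.toBits.take i).count false = _ := p.count_take_toBits U i
  have := List.count_true_add_count_false (p.toBits.take i)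
  have := p.count_D_le_count_U i
  have := List.length_take_le i p.toBits
  omega

variable {t : ℕ} {ps : List DyckWord}

theorem semilength_sum_of_forall (hps : ∀ p ∈ ps, p.semilength = t) :
    ps.sum.semilength = t * ps.length := by
  induction ps with
  | nil => simp
  | cons p ps ih =>
    simp only [List.sum_cons, semilength_add, List.length_cons, hps p List.mem_cons_self,
      ih fun q hq => hps q (List.mem_cons_of_mem p hq)]
    ring

theorem two_mul_count_true_take_sum_toBits (hps : ∀ p ∈ ps, p.semilength = t) {q : ℕ}
    (hq : 2 * t ∣ q) (hql : q ≤ 2 * t * ps.length) :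
    2 * (ps.sum.toBits.take q).count true = q := by
  set i := q / (2 * t)
  have hqi : 2 * t * i = q := Nat.mul_div_cancel' hq
  have hi : i ≤ ps.length := Nat.div_le_of_le_mul hql
  have htake : (ps.take i).sum.semilength = t * i := by
    rw [semilength_sum_of_forall fun p hp => hps p (List.mem_of_mem_take hp),
      List.length_take_of_le hi]
  rw [← List.take_append_drop i ps, List.sum_append, toBits_add,
    List.take_left' (by rw [length_toBits, htake]; linarith), count_true_toBits, htake]
  linarith

end DyckWord

def catalanWord (t : ℕ) (ps : List DyckWord) : List Bool :=
  (List.replicate t [true, false]).flatten ++ List.replicate (2 * t) true ++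
    (ps.map DyckWord.toBits).flatten

section CatalanWord

variable {t : ℕ} {ps : List DyckWord}

theorem length_catalanWord (hps : ∀ p ∈ ps, p.semilength = t) :
    (catalanWord t ps).length = 4 * t + 2 * t * ps.length := by
  rw [catalanWord, ← DyckWord.toBits_sum]
  simp [DyckWord.length_toBits, DyckWord.semilength_sum_of_forall hps]
  ring

theorem count_true_take_catalanWord (p : ℕ) :
    ((catalanWord t ps).take p).count true =
      (min p (2 * t) + 1) / 2 + min (p - 2 * t) (2 * t) +
        (ps.sum.toBits.take (p - 4 * t)).count true := by
  have hpre : ((List.replicate t [true, false]).flatten).length = 2 * t := by simp; ring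
  rw [catalanWord, ← DyckWord.toBits_sum, List.take_append, List.take_append, List.count_append,
    List.count_append, List.length_append, hpre, List.length_replicate, List.take_replicate,
    List.count_replicate_self, List.count_true_take_flatten_replicate_true_false,
    show 2 * t + 2 * t = 4 * t by ring]

theorem profile_catalanWord (hps : ∀ p ∈ ps, p.semilength = t) {n k : ℕ}
    (hn : (catalanWord t ps).length = n) (hk : k ≤ n) :
    profile n (extL (catalanWord t ps)) k = min k (2 * t) + (k - 2 * t) / 2 := by
  rw [length_catalanWord hps] at hn
  subst hn
  have hupper (q : ℕ) := ps.sum.two_mul_count_true_take_toBits_le q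
  have hblock {q : ℕ} (hq : 2 * t ∣ q) (hql : q ≤ 2 * t * ps.length) :=
    DyckWord.two_mul_count_true_take_sum_toBits hps hq hql
  have hlen : ps.sum.toBits.length = 2 * t * ps.length := by
    rw [DyckWord.length_toBits, DyckWord.semilength_sum_of_forall hps, mul_assoc]
  have hlower {q : ℕ} (hq : q ≤ 2 * t * ps.length) :=
    List.le_two_mul_count_true_take_add (hlen ▸ dvd_mul_right (2 * t) ps.length)
      (fun q hq hdvd => hblock hdvd (hlen ▸ hq)) (hlen ▸ hq)
  refine le_antisymm ?_ ?_
  · refine (profile_le_min (c := 2 * t) hk fun p hp => ?_).trans_eq (by omega)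
    rw [cnt_extL, count_true_take_catalanWord]
    have := hupper (p - 4 * t)
    have := hlower (q := p - 4 * t) (by omega)
    omega
  · refine min_add_half_le_profile (dvd_add ⟨2, by ring⟩ (dvd_mul_right _ _)) (by omega) hk
      ?_ ?_ ?_
    · intro p hp
      rw [cnt_extL, count_true_take_catalanWord, Nat.sub_eq_zero_of_le (by omega : p ≤ 4 * t)]
      simp only [List.take_zero, List.count_nil]
      omega
    · intro p hp₁ hp₂
      rw [cnt_extL, count_true_take_catalanWord, Nat.sub_eq_zero_of_le hp₂]
      simp only [List.take_zero, List.count_nil]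
      omega
    · rintro e he hte ⟨c, rfl⟩
      have hc : 2 ≤ c := by
        by_contra! hc
        interval_cases c <;> omega
      have h4t : 2 * t * 2 ≤ 2 * t * c := Nat.mul_le_mul_left _ hc
      rw [cnt_extL, count_true_take_catalanWord]
      have := hblock (q := 2 * t * c - 4 * t) (Nat.dvd_sub (dvd_mul_right _ _) ⟨2, by ring⟩)
        (by omega)
      omega

theorem eq_of_catalanWord_eq {qs : List DyckWord} (hps : ∀ p ∈ ps, p.semilength = t)
    (hqs : ∀ q ∈ qs, q.semilength = t) (hlen : ps.length = qs.length)
    (h : catalanWord t ps = catalanWord t qs) : ps = qs := by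
  have hlengths {rs : List DyckWord} (hrs : ∀ r ∈ rs, r.semilength = t) :
      (rs.map DyckWord.toBits).map List.length = List.replicate rs.length (2 * t) := by
    rw [List.map_map, ← List.map_const']
    exact List.map_congr_left fun r hr => by simp [DyckWord.length_toBits, hrs r hr]
  refine List.map_injective_iff.2 DyckWord.toBits_injective (List.eq_iff_flatten_eq.2 ⟨?_, ?_⟩)
  · exact List.append_cancel_left h
  · rw [hlengths hps, hlengths hqs, hlen]

end CatalanWord

theorem count_words_with_pnf_lower_bound_general (t : ℕ) (n : ℕ)
    (hn : 4 * t ≤ n) (hdvd : 2 * t ∣ n) :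
    catalan t ^ ((n - 4 * t) / (2 * t)) ≤
      Set.ncard {w : Fin n → Bool | ∀ k : ℕ, k ≤ n →
        profile n (ext w) k =
          cnt (extL (List.replicate (2 * t) true ++
            (List.replicate ((n - 2 * t) / 2) [false, true]).flatten)) 0 k} := by
  set m := (n - 4 * t) / (2 * t)
  have hnm : 2 * t * m = n - 4 * t := Nat.mul_div_cancel' (Nat.dvd_sub hdvd ⟨2, by ring⟩)
  have heven : 2 ∣ n := (dvd_mul_right 2 t).trans hdvd
  let word (c : Fin m → {p : DyckWord // p.semilength = t}) : List Bool :=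
    catalanWord t (List.ofFn fun j => (c j).1)
  have hsemi (c : Fin m → {p : DyckWord // p.semilength = t}) :
      ∀ p ∈ List.ofFn fun j => (c j).1, p.semilength = t := by
    simp only [List.mem_ofFn]; rintro _ ⟨j, rfl⟩; exact (c j).2
  have hlen c : (word c).length = n := by
    rw [length_catalanWord (hsemi c), List.length_ofFn]; omega
  have hinj : Function.Injective fun c (i : Fin n) => (word c).getD i false := fun c c' h => by
    have hext := congrArg ext h
    rw [ext_getD_eq_extL (hlen c), ext_getD_eq_extL (hlen c')] at hext
    have := eq_of_catalanWord_eq (hsemi c) (hsemi c') (by simp)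
      (eq_of_extL_eq ((hlen c).trans (hlen c').symm) hext)
    funext j
    exact Subtype.ext (congrFun (List.ofFn_injective this) j)
  calc catalan t ^ m = Nat.card (Fin m → {p : DyckWord // p.semilength = t}) := by
        rw [Nat.card_fun, Nat.card_eq_fintype_card, DyckWord.card_dyckWord_semilength_eq_catalan,
          Nat.card_fin]
    _ = (Set.range _).ncard := (Set.ncard_range_of_injective hinj).symm
    _ ≤ _ := Set.ncard_le_ncard <| Set.range_subset_iff.2 fun c k hk => by
      rw [ext_getD_eq_extL (hlen c), profile_catalanWord (hsemi c) (hlen c) hk, cnt_extL,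
        List.count_true_take_replicate_append_flatten_replicate]
      omega

/-- Let `t ≥ 1` and let `n` be a multiple of `2t` with `n ≥ 4t`. The number of
binary words `w` of length `n` whose prefix normal form equals
`u = 1^{2t} (01)^{(n-2t)/2}` (i.e. whose profile satisfies
`f_w(k) = |u[1,k]|₁` for all `0 ≤ k ≤ n`) is at least `C_t^{(n-4t)/(2t)}`,
where `C_t = (1/(t+1)) C(2t,t)` is the `t`-th Catalan number. -/
theorem count_words_with_pnf_lower_bound (t : ℕ) (ht : 1 ≤ t) (n : ℕ)
    (hn : 4 * t ≤ n) (hdvd : 2 * t ∣ n) :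
    catalan t ^ ((n - 4 * t) / (2 * t)) ≤
      Set.ncard {w : Fin n → Bool | ∀ k : ℕ, k ≤ n →
        profile n (ext w) k =
          cnt (extL (List.replicate (2 * t) true ++
            (List.replicate ((n - 2 * t) / 2) [false, true]).flatten)) 0 k} :=
  count_words_with_pnf_lower_bound_general t n hn hdvd
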